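/- arXiv:2006.14062 — 3 statements merged into one kernel-verified Lean document; each statement's English description precedes it below -/
import Mathlib

section
/- Let {μ*_j}_{j=1}^K ⊆ ℝ^d and labels {y*_i}_{i=1}^n ⊆ [K], with s = min_{j≠k} ‖μ*_j - μ*_k‖₂ and n_min = min_j |{i : y*_i = j}|. Suppose {μ̂_j}, {ŷ_i} satisfy the near-optimality and low-noise conditions of approximate k-means with parameters C > 0 and δ ∈ (0, s/2). Then there exists a permutation τ of [K] such that ∑_{j=1}^K ‖μ*_j - μ̂_{τ(j)}‖₂² ≤ ((1+√C)²·K/n_min)·L({μ*_j},{y*_i}). -/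
/-!
Every point `x_i` of the true cluster `j` lies at distance `dist (x i) (μ*_j)` from its true centre
and `dist (x i) (μ̂_{ŷ_i})` from its estimated one; by Minkowski's inequality the sum over the
cluster of the squares of these sums is at most `(√L* + √L̂)² ≤ (1 + √C)² L*`. Some point of the
cluster therefore does at most the average, so the triangle inequality puts an estimated centre
within `√((1 + √C)² L* / n_min) ≤ δ < s / 2` of `μ*_j`. As the true centres are `s`-separated,
different clusters pick different estimated centres, so the choice is a permutation of `Fin K`.
-/

/-- The k-means loss `L({μ_j},{y_i}) = ∑ᵢ ‖x_i - μ_{y_i}‖²`. -/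
noncomputable def kmeansLoss {n d K : ℕ} (x : Fin n → EuclideanSpace ℝ (Fin d))
    (μ : Fin K → EuclideanSpace ℝ (Fin d)) (y : Fin n → Fin K) : ℝ :=
  ∑ i, dist (x i) (μ (y i)) ^ 2

open Finset

theorem Finset.sum_add_sq_le_sq_sqrt_add_sqrt {ι : Type*} (s : Finset ι) (f g : ι → ℝ) :
    ∑ i ∈ s, (f i + g i) ^ 2 ≤ (√(∑ i ∈ s, f i ^ 2) + √(∑ i ∈ s, g i ^ 2)) ^ 2 := by
  have hf : 0 ≤ ∑ i ∈ s, f i ^ 2 := sum_nonneg fun _ _ ↦ sq_nonneg _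
  have hg : 0 ≤ ∑ i ∈ s, g i ^ 2 := sum_nonneg fun _ _ ↦ sq_nonneg _
  calc ∑ i ∈ s, (f i + g i) ^ 2
      = ∑ i ∈ s, f i ^ 2 + 2 * ∑ i ∈ s, f i * g i + ∑ i ∈ s, g i ^ 2 := by
        simp only [add_sq, sum_add_distrib, mul_assoc, ← mul_sum]
    _ ≤ ∑ i ∈ s, f i ^ 2 + 2 * (√(∑ i ∈ s, f i ^ 2) * √(∑ i ∈ s, g i ^ 2))
          + ∑ i ∈ s, g i ^ 2 := by
        gcongr
        exact Real.sum_mul_le_sqrt_mul_sqrt s f g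
    _ = (√(∑ i ∈ s, f i ^ 2) + √(∑ i ∈ s, g i ^ 2)) ^ 2 := by
        rw [add_sq, Real.sq_sqrt hf, Real.sq_sqrt hg]
        ring

theorem Function.injective_of_dist_lt_half_separation {X ι κ : Type*} [PseudoMetricSpace X]
    {p : ι → X} {q : κ → X} {σ : ι → κ} {s : ℝ}
    (hp : ∀ j k, j ≠ k → s ≤ dist (p j) (p k)) (hσ : ∀ j, dist (p j) (q (σ j)) < s / 2) :
    Function.Injective σ := by
  intro j k hjk
  by_contra hne
  have hk := hσ k
  rw [← hjk] at hk
  linarith [hp j k hne, hσ j, dist_triangle_right (p j) (p k) (q (σ j))]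

section KMeans

variable {n d K : ℕ}

theorem kmeansLoss_nonneg (x : Fin n → EuclideanSpace ℝ (Fin d))
    (μ : Fin K → EuclideanSpace ℝ (Fin d)) (y : Fin n → Fin K) : 0 ≤ kmeansLoss x μ y :=
  sum_nonneg fun _ _ ↦ sq_nonneg _

theorem exists_card_mul_dist_sq_le_of_kmeansLoss (x : Fin n → EuclideanSpace ℝ (Fin d))
    (μ μ' : Fin K → EuclideanSpace ℝ (Fin d)) (y y' : Fin n → Fin K) (j : Fin K)
    (hj : ({i | y i = j} : Finset (Fin n)).Nonempty) :
    ∃ c, #{i | y i = j} * dist (μ j) (μ' c) ^ 2 ≤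
      (√(kmeansLoss x μ y) + √(kmeansLoss x μ' y')) ^ 2 := by
  set S : Finset (Fin n) := {i | y i = j}
  have hμ : ∑ i ∈ S, dist (x i) (μ j) ^ 2 ≤ kmeansLoss x μ y :=
    calc ∑ i ∈ S, dist (x i) (μ j) ^ 2 = ∑ i ∈ S, dist (x i) (μ (y i)) ^ 2 :=
          sum_congr rfl fun i hi ↦ by rw [(mem_filter.1 hi).2]
      _ ≤ kmeansLoss x μ y :=
          sum_le_sum_of_subset_of_nonneg (subset_univ S) fun _ _ _ ↦ sq_nonneg _
  have hμ' : ∑ i ∈ S, dist (x i) (μ' (y' i)) ^ 2 ≤ kmeansLoss x μ' y' :=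
    sum_le_sum_of_subset_of_nonneg (subset_univ S) fun _ _ _ ↦ sq_nonneg _
  obtain ⟨i₀, -, hmin⟩ :=
    S.exists_min_image (fun i ↦ dist (x i) (μ j) + dist (x i) (μ' (y' i))) hj
  refine ⟨y' i₀, ?_⟩
  calc #S * dist (μ j) (μ' (y' i₀)) ^ 2
      ≤ #S * (dist (x i₀) (μ j) + dist (x i₀) (μ' (y' i₀))) ^ 2 := by
        gcongr
        exact dist_triangle_left _ _ _
    _ ≤ ∑ i ∈ S, (dist (x i) (μ j) + dist (x i) (μ' (y' i))) ^ 2 := by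
        rw [← nsmul_eq_mul]
        exact card_nsmul_le_sum _ _ _ fun i hi ↦ pow_le_pow_left₀ (by positivity) (hmin i hi) 2
    _ ≤ (√(∑ i ∈ S, dist (x i) (μ j) ^ 2) + √(∑ i ∈ S, dist (x i) (μ' (y' i)) ^ 2)) ^ 2 :=
        sum_add_sq_le_sq_sqrt_add_sqrt S _ _
    _ ≤ (√(kmeansLoss x μ y) + √(kmeansLoss x μ' y')) ^ 2 := by
        gcongr

end KMeans

theorem approx_kmeans_center_recovery_general {n d K : ℕ} (hK : 0 < K)
    (x : Fin n → EuclideanSpace ℝ (Fin d))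
    (μstar μhat : Fin K → EuclideanSpace ℝ (Fin d))
    (ystar yhat : Fin n → Fin K) (C s δ : ℝ) (nmin : ℕ)
    (hC : 0 < C) (hnmin0 : 0 < nmin)
    (hs : ∀ j k, j ≠ k → s ≤ dist (μstar j) (μstar k))
    (hnmin : ∀ j, nmin ≤ Set.ncard {i | ystar i = j})
    (hδ0 : 0 < δ) (hδs : δ < s / 2)
    (hnear : kmeansLoss x μhat yhat ≤ C * kmeansLoss x μstar ystar)
    (hlow : kmeansLoss x μstar ystar ≤
      δ ^ 2 * nmin / ((1 + Real.sqrt C) ^ 2 * K)) :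
    ∃ τ : Equiv.Perm (Fin K),
      ∑ j, dist (μstar j) (μhat (τ j)) ^ 2 ≤
        (1 + Real.sqrt C) ^ 2 * K / nmin * kmeansLoss x μstar ystar := by
  set L := kmeansLoss x μstar ystar
  have hnminR : (0 : ℝ) < nmin := Nat.cast_pos.2 hnmin0
  have hcard : ∀ j, nmin ≤ #{i | ystar i = j} := fun j ↦ by
    rw [← Set.ncard_coe_finset, coe_filter_univ]
    exact hnmin j
  have hloss : (√L + √(kmeansLoss x μhat yhat)) ^ 2 ≤ (1 + √C) ^ 2 * L := by
    have hhat : √(kmeansLoss x μhat yhat) ≤ √C * √L :=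
      (Real.sqrt_le_sqrt hnear).trans_eq (Real.sqrt_mul hC.le L)
    calc (√L + √(kmeansLoss x μhat yhat)) ^ 2 ≤ ((1 + √C) * √L) ^ 2 := by gcongr; linarith
      _ = (1 + √C) ^ 2 * L := by rw [mul_pow, Real.sq_sqrt (kmeansLoss_nonneg _ _ _)]
  choose σ hσ using fun j ↦ exists_card_mul_dist_sq_le_of_kmeansLoss x μstar μhat ystar yhat j
    (card_pos.1 (hnmin0.trans_le (hcard j)))
  have hσL : ∀ j, dist (μstar j) (μhat (σ j)) ^ 2 ≤ (1 + √C) ^ 2 * L / nmin := fun j ↦ by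
    rw [le_div_iff₀ hnminR, mul_comm]
    calc (nmin : ℝ) * dist (μstar j) (μhat (σ j)) ^ 2
        ≤ #{i | ystar i = j} * dist (μstar j) (μhat (σ j)) ^ 2 := by gcongr; exact hcard j
      _ ≤ (1 + √C) ^ 2 * L := (hσ j).trans hloss
  have hσs : ∀ j, dist (μstar j) (μhat (σ j)) < s / 2 := fun j ↦ by
    refine lt_of_pow_lt_pow_left₀ 2 (by linarith) ?_
    calc dist (μstar j) (μhat (σ j)) ^ 2 ≤ (1 + √C) ^ 2 * L / nmin := hσL j
      _ ≤ δ ^ 2 / K := by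
        rw [div_le_div_iff₀ hnminR (Nat.cast_pos.2 hK)]
        rw [le_div_iff₀ (by positivity)] at hlow
        linarith
      _ ≤ δ ^ 2 := div_le_self (sq_nonneg δ) (Nat.one_le_cast.2 hK)
      _ < (s / 2) ^ 2 := pow_lt_pow_left₀ hδs hδ0.le two_ne_zero
  refine ⟨Equiv.ofBijective σ (Finite.injective_iff_bijective.1
    (Function.injective_of_dist_lt_half_separation hs hσs)), ?_⟩
  calc ∑ j, dist (μstar j) (μhat (σ j)) ^ 2 ≤ ∑ _j : Fin K, (1 + √C) ^ 2 * L / nmin :=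
        sum_le_sum fun j _ ↦ hσL j
    _ = (1 + √C) ^ 2 * K / nmin * L := by
        rw [sum_const, card_univ, Fintype.card_fin, nsmul_eq_mul]
        ring

/-- Approximate k-means (Lemma on center recovery): under near-optimality and the
low-noise condition, there is a permutation `τ` with
`∑_j ‖μ*_j - μ̂_{τ(j)}‖² ≤ (1+√C)² K / n_min · L({μ*_j},{y*_i})`. -/
theorem approx_kmeans_center_recovery {n d K : ℕ} (hK : 0 < K)
    (x : Fin n → EuclideanSpace ℝ (Fin d))
    (μstar μhat : Fin K → EuclideanSpace ℝ (Fin d))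
    (ystar yhat : Fin n → Fin K) (C s δ : ℝ) (nmin : ℕ)
    (hC : 0 < C) (hnmin0 : 0 < nmin)
    (hs : ∀ j k, j ≠ k → s ≤ dist (μstar j) (μstar k))
    (hnmin : ∀ j, nmin ≤ Set.ncard {i | ystar i = j})
    (hδ0 : 0 < δ) (hδs : δ < s / 2)
    (hnear : kmeansLoss x μhat yhat ≤ C * kmeansLoss x μstar ystar)
    (hargmin : ∀ i j, dist (x i) (μhat (yhat i)) ≤ dist (x i) (μhat j))
    (hlow : kmeansLoss x μstar ystar ≤
      δ ^ 2 * nmin / ((1 + Real.sqrt C) ^ 2 * K)) :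
    ∃ τ : Equiv.Perm (Fin K),
      ∑ j, dist (μstar j) (μhat (τ j)) ^ 2 ≤
        (1 + Real.sqrt C) ^ 2 * K / nmin * kmeansLoss x μstar ystar :=
  approx_kmeans_center_recovery_general hK x μstar μhat ystar yhat C s δ nmin hC hnmin0 hs hnmin hδ0
    hδs hnear hlow
end

section
/- In the setting of the approximate k-means lemma, with permutation τ as constructed, the set of misclassified points satisfies {i : ŷ_i ≠ τ(y*_i)} ⊆ {i : ‖x_i - μ*_{y*_i}‖₂ ≥ s/2 - δ}, and hence |{i : ŷ_i ≠ τ(y*_i)}| ≤ L({μ*_j},{y*_i})/(s/2 - δ)². -/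
lemma eq_of_dist_le_of_dist_lt_half_sub {α ι : Type*} [PseudoMetricSpace α] {μ ν : ι → α}
    {s δ : ℝ} (hs : ∀ j k, j ≠ k → s ≤ dist (μ j) (μ k)) (hν : ∀ j, dist (μ j) (ν j) ≤ δ)
    {x : α} {j k : ι} (hx : dist x (μ j) < s / 2 - δ) (hk : dist x (ν k) ≤ dist x (ν j)) :
    k = j := by
  by_contra hkj
  have hνj : dist x (ν j) ≤ dist x (μ j) + δ :=
    (dist_triangle _ _ _).trans (add_le_add_right (hν j) _)
  have hsep := calc
    s ≤ dist (μ j) (μ k) := hs j k (Ne.symm hkj)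
    _ ≤ dist (μ j) x + dist x (ν k) + dist (ν k) (μ k) := dist_triangle4 _ _ _ _
    _ ≤ dist x (μ j) + (dist x (μ j) + δ) + δ := by
      rw [dist_comm (μ j), dist_comm (ν k)]
      gcongr
      · exact hk.trans hνj
      · exact hν k
  linarith

lemma ncard_le_sum_div_of_le {ι : Type*} [Fintype ι] {S : Set ι} {f : ι → ℝ} {a : ℝ}
    (ha : 0 < a) (hf : ∀ i, 0 ≤ f i) (hS : ∀ i ∈ S, a ≤ f i) :
    (S.ncard : ℝ) ≤ (∑ i, f i) / a := by
  classical
  rw [le_div_iff₀ ha, Set.ncard_eq_toFinset_card', ← nsmul_eq_mul]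
  calc S.toFinset.card • a ≤ ∑ i ∈ S.toFinset, f i :=
        Finset.card_nsmul_le_sum _ _ _ fun i hi => hS i (Set.mem_toFinset.mp hi)
    _ ≤ ∑ i, f i :=
        Finset.sum_le_sum_of_subset_of_nonneg (Finset.subset_univ _) fun i _ _ => hf i

theorem approx_kmeans_misclassification_general {n d K : ℕ}
    (x : Fin n → EuclideanSpace ℝ (Fin d))
    (μstar μhat : Fin K → EuclideanSpace ℝ (Fin d))
    (ystar yhat : Fin n → Fin K) (s δ : ℝ)
    (hs : ∀ j k, j ≠ k → s ≤ dist (μstar j) (μstar k))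
    (hδs : δ < s / 2)
    (hargmin : ∀ i j, dist (x i) (μhat (yhat i)) ≤ dist (x i) (μhat j))
    (τ : Equiv.Perm (Fin K))
    (hτ : ∀ j, dist (μstar j) (μhat (τ j)) ≤ δ) :
    {i : Fin n | yhat i ≠ τ (ystar i)} ⊆
      {i : Fin n | s / 2 - δ ≤ dist (x i) (μstar (ystar i))} ∧
    (Set.ncard {i : Fin n | yhat i ≠ τ (ystar i)} : ℝ) ≤
      kmeansLoss x μstar ystar / (s / 2 - δ) ^ 2 := by
  have hmisclassified : {i : Fin n | yhat i ≠ τ (ystar i)} ⊆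
      {i : Fin n | s / 2 - δ ≤ dist (x i) (μstar (ystar i))} := by
    intro i hi
    simp only [Set.mem_ofPred_eq] at hi ⊢
    by_contra! hnear
    have hnearest := eq_of_dist_le_of_dist_lt_half_sub (ν := μhat ∘ τ) hs hτ hnear
      (k := τ.symm (yhat i)) (by simpa using hargmin i (τ (ystar i)))
    exact hi (by rw [← hnearest, Equiv.apply_symm_apply])
  have hgap : 0 < s / 2 - δ := sub_pos.mpr hδs
  refine ⟨hmisclassified, ncard_le_sum_div_of_le (pow_pos hgap 2) (fun i => sq_nonneg _) ?_⟩
  exact fun i hi => pow_le_pow_left₀ hgap.le (hmisclassified hi) 2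

/-- Approximate k-means (misclassification part): with a matching permutation `τ`
satisfying `‖μ*_j - μ̂_{τ(j)}‖ ≤ δ` for all `j`, every misclassified point `i`
satisfies `‖x_i - μ*_{y*_i}‖ ≥ s/2 - δ`, and hence the number of misclassified
points is at most `L({μ*_j},{y*_i}) / (s/2 - δ)²`. -/
theorem approx_kmeans_misclassification {n d K : ℕ} (hK : 0 < K)
    (x : Fin n → EuclideanSpace ℝ (Fin d))
    (μstar μhat : Fin K → EuclideanSpace ℝ (Fin d))
    (ystar yhat : Fin n → Fin K) (C s δ : ℝ) (nmin : ℕ)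
    (hC : 0 < C) (hnmin0 : 0 < nmin)
    (hs : ∀ j k, j ≠ k → s ≤ dist (μstar j) (μstar k))
    (hnmin : ∀ j, nmin ≤ Set.ncard {i | ystar i = j})
    (hδ0 : 0 < δ) (hδs : δ < s / 2)
    (hnear : kmeansLoss x μhat yhat ≤ C * kmeansLoss x μstar ystar)
    (hargmin : ∀ i j, dist (x i) (μhat (yhat i)) ≤ dist (x i) (μhat j))
    (hlow : kmeansLoss x μstar ystar ≤
      δ ^ 2 * nmin / ((1 + Real.sqrt C) ^ 2 * K))
    (τ : Equiv.Perm (Fin K))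
    (hτ : ∀ j, dist (μstar j) (μhat (τ j)) ≤ δ) :
    {i : Fin n | yhat i ≠ τ (ystar i)} ⊆
      {i : Fin n | s / 2 - δ ≤ dist (x i) (μstar (ystar i))} ∧
    (Set.ncard {i : Fin n | yhat i ≠ τ (ystar i)} : ℝ) ≤
      kmeansLoss x μstar ystar / (s / 2 - δ) ^ 2 :=
  approx_kmeans_misclassification_general x μstar μhat ystar yhat s δ hs hδs hargmin τ hτ
end

section
/- Suppose the matrices Ŷ M̂ᵀ and Y* M*ᵀ (built from estimated/true labels and centers as described) satisfy ‖Ŷ M̂ᵀ - Y* M*ᵀ‖_F² < n_min·s²/(4K), where s = min_{j≠k}‖μ*_j - μ*_k‖₂ and n_min is the minimum true cluster size. Define τ(j) = argmax_k |{i : y*_i = j, ŷ_i = k}|. Then τ : [K] → [K] is injective (a permutation), and ∑_{j=1}^K ‖μ*_j - μ̂_{τ(j)}‖₂² ≤ (K/n_min)·‖Ŷ M̂ᵀ - Y* M*ᵀ‖_F². -/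
/-!
Let `S j k` (`confusion`) count the points with true label `j` and estimated label `k`. Grouping the
points by their label pair gives `‖Ŷ M̂ᵀ - Y* M*ᵀ‖_F² = ∑_{j,k} S j k ‖μ*_j - μ̂_k‖²`, and since
`τ j` is a plurality label, `S j (τ j) ≥ n_min / K`. Keeping only the terms `k = τ j` gives
`(n_min / K) ∑_j ‖μ*_j - μ̂_{τ j}‖² ≤ ‖Ŷ M̂ᵀ - Y* M*ᵀ‖_F² < (n_min / K) s² / 4`, which is the
bound, and also shows that the matching error `∑_j ‖μ*_j - μ̂_{τ j}‖²` is below `s² / 4`. If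
`τ a = τ b` with `a ≠ b`, the triangle inequality through `μ̂_{τ a}` would force that error to be
at least `s² / 2`.
-/

open Finset Function

section Confusion

variable {ι κ κ' : Type*} [Fintype ι] [DecidableEq κ] [DecidableEq κ']

def confusion (y : ι → κ) (ŷ : ι → κ') (j : κ) (k : κ') : ℕ := #{i | y i = j ∧ ŷ i = k}

lemma ncard_setOf_eq_card_filter (p : ι → Prop) [DecidablePred p] :
    {i | p i}.ncard = #{i | p i} := by
  rw [← Set.ncard_coe_finset, coe_filter]
  simp

lemma ncard_setOf_eq_confusion (y : ι → κ) (ŷ : ι → κ') (j : κ) (k : κ') :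
    {i | y i = j ∧ ŷ i = k}.ncard = confusion y ŷ j k :=
  ncard_setOf_eq_card_filter _

lemma sum_confusion_eq_card [Fintype κ'] (y : ι → κ) (ŷ : ι → κ') (j : κ) :
    ∑ k, confusion y ŷ j k = #{i | y i = j} := by
  rw [card_eq_sum_card_fiberwise (f := ŷ) (t := univ) fun _ _ ↦ mem_univ _]
  simp only [confusion, filter_filter]

lemma card_le_card_mul_confusion_of_forall_le [Fintype κ'] {y : ι → κ} {ŷ : ι → κ'} {j : κ}
    {k₀ : κ'} (h : ∀ k, confusion y ŷ j k ≤ confusion y ŷ j k₀) :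
    #{i | y i = j} ≤ Fintype.card κ' * confusion y ŷ j k₀ := by
  rw [← sum_confusion_eq_card y ŷ j]
  simpa using sum_le_card_nsmul univ _ _ fun k _ ↦ h k

lemma sum_confusion_smul [Fintype κ] [Fintype κ'] {M : Type*} [AddCommMonoid M]
    (y : ι → κ) (ŷ : ι → κ') (g : κ → κ' → M) :
    ∑ j, ∑ k, confusion y ŷ j k • g j k = ∑ i, g (y i) (ŷ i) := by
  rw [← sum_fiberwise univ y]
  refine sum_congr rfl fun j _ ↦ ?_
  rw [← sum_fiberwise _ ŷ]
  refine sum_congr rfl fun k _ ↦ ?_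
  rw [confusion, filter_filter, ← sum_const]
  exact sum_congr rfl fun i hi ↦ by obtain ⟨rfl, rfl⟩ := (mem_filter.1 hi).2; rfl

lemma mul_sum_le_sum_of_le_confusion [Fintype κ] [Fintype κ'] {y : ι → κ} {ŷ : ι → κ'}
    {τ : κ → κ'} {c : ℝ} {g : κ → κ' → ℝ} (hg : ∀ j k, 0 ≤ g j k)
    (hc : ∀ j, c ≤ confusion y ŷ j (τ j)) :
    c * ∑ j, g j (τ j) ≤ ∑ i, g (y i) (ŷ i) := by
  rw [← sum_confusion_smul y ŷ g, mul_sum]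
  refine sum_le_sum fun j _ ↦ ?_
  calc c * g j (τ j) ≤ confusion y ŷ j (τ j) • g j (τ j) := by
        rw [nsmul_eq_mul]; exact mul_le_mul_of_nonneg_right (hc j) (hg j (τ j))
    _ ≤ ∑ k, confusion y ŷ j k • g j k :=
        single_le_sum (fun k _ ↦ nsmul_nonneg (hg j k) _) (mem_univ (τ j))

end Confusion

lemma injective_of_sum_sq_dist_lt {E κ κ' : Type*} [PseudoMetricSpace E] [Fintype κ]
    {x : κ → E} {y : κ' → E} {τ : κ → κ'} {s : ℝ} (hs0 : 0 ≤ s)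
    (hs : ∀ j k, j ≠ k → s ≤ dist (x j) (x k))
    (h : ∑ j, dist (x j) (y (τ j)) ^ 2 < s ^ 2 / 2) : Injective τ := by
  classical
  intro a b hab
  by_contra hne
  have hsep : s ≤ dist (x a) (y (τ a)) + dist (x b) (y (τ b)) :=
    (hs a b hne).trans (hab ▸ dist_triangle_right _ _ _)
  have hpair : dist (x a) (y (τ a)) ^ 2 + dist (x b) (y (τ b)) ^ 2
      ≤ ∑ j, dist (x j) (y (τ j)) ^ 2 := by
    rw [← sum_pair hne (f := fun j ↦ dist (x j) (y (τ j)) ^ 2)]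
    exact sum_le_univ_sum_of_nonneg fun _ ↦ sq_nonneg _
  nlinarith [pow_le_pow_left₀ hs0 hsep 2,
    sq_nonneg (dist (x a) (y (τ a)) - dist (x b) (y (τ b)))]

theorem kmeans_plurality_matching_general {n d K : ℕ}
    (μstar μhat : Fin K → EuclideanSpace ℝ (Fin d))
    (ystar yhat : Fin n → Fin K) (s : ℝ) (nmin : ℕ)
    (hs0 : 0 < s)
    (hs : ∀ j k, j ≠ k → s ≤ dist (μstar j) (μstar k))
    (hnmin : ∀ j, nmin ≤ Set.ncard {i | ystar i = j})
    (hF : ∑ i, dist (μhat (yhat i)) (μstar (ystar i)) ^ 2 <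
      nmin * s ^ 2 / (4 * K))
    (τ : Fin K → Fin K)
    (hτ : ∀ j k, Set.ncard {i | ystar i = j ∧ yhat i = k} ≤
      Set.ncard {i | ystar i = j ∧ yhat i = τ j}) :
    Function.Injective τ ∧
    ∑ j, dist (μstar j) (μhat (τ j)) ^ 2 ≤
      (K : ℝ) / nmin * ∑ i, dist (μhat (yhat i)) (μstar (ystar i)) ^ 2 := by
  set F := ∑ i, dist (μhat (yhat i)) (μstar (ystar i)) ^ 2
  set T := ∑ j, dist (μstar j) (μhat (τ j)) ^ 2
  set c : ℝ := nmin / K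
  have hc_le : ∀ j, c ≤ confusion ystar yhat j (τ j) := fun j ↦ by
    have hcard := card_le_card_mul_confusion_of_forall_le (y := ystar) (ŷ := yhat) (j := j)
      fun k ↦ by simpa only [ncard_setOf_eq_confusion] using hτ j k
    rw [← ncard_setOf_eq_card_filter, Fintype.card_fin] at hcard
    exact div_le_of_le_mul₀ K.cast_nonneg (Nat.cast_nonneg _)
      (by rw [mul_comm]; exact_mod_cast (hnmin j).trans hcard)
  have hcT : c * T ≤ F :=
    (mul_sum_le_sum_of_le_confusion (fun j k ↦ sq_nonneg (dist (μstar j) (μhat k))) hc_le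
      ).trans_eq (sum_congr rfl fun i _ ↦ by rw [dist_comm])
  have hFc : F < c * (s ^ 2 / 4) := hF.trans_eq (by ring)
  have hc : 0 < c :=
    pos_of_mul_pos_left ((by positivity : 0 ≤ F).trans_lt hFc) (by positivity)
  have hTs : T < s ^ 2 / 4 := lt_of_mul_lt_mul_left (hcT.trans_lt hFc) hc.le
  refine ⟨injective_of_sum_sq_dist_lt hs0.le hs (show T < s ^ 2 / 2 by linarith [sq_nonneg s]),
    ?_⟩
  rw [← inv_div]
  exact (le_inv_mul_iff₀ hc).2 hcT

/-- Matching-by-plurality step of the approximate k-means analysis.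
If `‖Ŷ M̂ᵀ - Y* M*ᵀ‖_F² = ∑ᵢ ‖μ̂_{ŷ_i} - μ*_{y*_i}‖² < n_min s² / (4K)` and
`τ(j)` maximizes `k ↦ |{i : y*_i = j, ŷ_i = k}|`, then `τ` is injective
(a permutation) and `∑_j ‖μ*_j - μ̂_{τ(j)}‖² ≤ (K/n_min) ‖Ŷ M̂ᵀ - Y* M*ᵀ‖_F²`. -/
theorem kmeans_plurality_matching {n d K : ℕ} (hK : 0 < K)
    (μstar μhat : Fin K → EuclideanSpace ℝ (Fin d))
    (ystar yhat : Fin n → Fin K) (s : ℝ) (nmin : ℕ)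
    (hs0 : 0 < s) (hnmin0 : 0 < nmin)
    (hs : ∀ j k, j ≠ k → s ≤ dist (μstar j) (μstar k))
    (hnmin : ∀ j, nmin ≤ Set.ncard {i | ystar i = j})
    (hF : ∑ i, dist (μhat (yhat i)) (μstar (ystar i)) ^ 2 <
      nmin * s ^ 2 / (4 * K))
    (τ : Fin K → Fin K)
    (hτ : ∀ j k, Set.ncard {i | ystar i = j ∧ yhat i = k} ≤
      Set.ncard {i | ystar i = j ∧ yhat i = τ j}) :
    Function.Injective τ ∧
    ∑ j, dist (μstar j) (μhat (τ j)) ^ 2 ≤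
      (K : ℝ) / nmin * ∑ i, dist (μhat (yhat i)) (μstar (ystar i)) ^ 2 :=
  kmeans_plurality_matching_general μstar μhat ystar yhat s nmin hs0 hs hnmin hF τ hτ
end
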